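/- arXiv:math/9807095 — 2 statements merged into one kernel-verified Lean document; each statement's English description precedes it below -/
import Mathlib

section
/- Let Q ∈ GL(n, ℂ) satisfy Q·conj(Q) = c·I_n with c ∈ ℂ, and suppose Tr(Q Q*) = Tr((Q Q*)^{-1}). Then c = ±1, and if n is odd then c = 1. -/
/-!
Since `conj Q = c • Q⁻¹`, the positive matrix `P = Q Qᴴ` equals `c • A` with `A = Q (Q⁻¹)ᵀ`, and
`A⁻¹ = Qᵀ Q⁻¹` is similar to `Aᵀ`, so `tr P = c · tr A` and `tr P⁻¹ = c⁻¹ · tr A`. As `tr P > 0`,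
the trace condition forces `c = c⁻¹`, i.e. `c = ±1`. Taking determinants, `cⁿ = |det Q|² > 0`,
which excludes `c = -1` for odd `n`.
-/

open Matrix

open scoped ComplexOrder

section CommRing

variable {ι R : Type*} [Fintype ι] [DecidableEq ι] [CommRing R]

theorem Matrix.trace_inv_mul_transpose_inv {Q : Matrix ι ι R} (hQ : IsUnit Q.det) :
    ((Q * Q⁻¹ᵀ)⁻¹).trace = (Q * Q⁻¹ᵀ).trace := by
  calc ((Q * Q⁻¹ᵀ)⁻¹).trace = (Qᵀ * Q⁻¹).trace := by
        rw [mul_inv_rev, transpose_nonsing_inv, nonsing_inv_nonsing_inv _ (by rwa [det_transpose])]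
    _ = (Q⁻¹ * Qᵀ).trace := trace_mul_comm _ _
    _ = (Q * Q⁻¹ᵀ).trace := by
        rw [← trace_transpose, transpose_mul, transpose_transpose]

end CommRing

section Complex

variable {ι : Type*} [Fintype ι] [DecidableEq ι]

theorem Matrix.det_mul_map_conj (Q : Matrix ι ι ℂ) :
    (Q * Q.map (starRingEnd ℂ)).det = (Complex.normSq Q.det : ℂ) := by
  rw [det_mul, Complex.normSq_eq_conj_mul_self, mul_comm Q.det]
  exact congrArg (· * Q.det) (RingHom.map_det (starRingEnd ℂ) Q).symm

theorem Matrix.conjTranspose_eq_smul_transpose_inv {Q : Matrix ι ι ℂ} {c : ℂ}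
    (hQ : IsUnit Q.det) (h : Q * Q.map (starRingEnd ℂ) = c • 1) :
    Qᴴ = c • Q⁻¹ᵀ := by
  have hconj : Q.map (starRingEnd ℂ) = c • Q⁻¹ := by
    calc Q.map (starRingEnd ℂ) = Q⁻¹ * (Q * Q.map (starRingEnd ℂ)) := by
          rw [← mul_assoc, nonsing_inv_mul Q hQ, one_mul]
      _ = c • Q⁻¹ := by rw [h, Matrix.mul_smul, mul_one]
  rw [← transpose_smul, ← hconj]
  rfl

theorem Matrix.mul_self_eq_one_of_mul_map_conj_eq_smul_one [Nonempty ι] {Q : Matrix ι ι ℂ}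
    {c : ℂ}
    (hQ : IsUnit Q.det) (hc : c ≠ 0) (h : Q * Q.map (starRingEnd ℂ) = c • 1)
    (htr : (Q * Qᴴ).trace = ((Q * Qᴴ)⁻¹).trace) :
    c * c = 1 := by
  have hP : Q * Qᴴ = c • (Q * Q⁻¹ᵀ) := by
    rw [conjTranspose_eq_smul_transpose_inv hQ h, Matrix.mul_smul]
  have hA : IsUnit (Q * Q⁻¹ᵀ).det := by
    rw [det_mul, det_transpose, det_nonsing_inv]
    exact hQ.mul (isUnit_ringInverse.mpr hQ)
  have htrP : (Q * Qᴴ).trace = c * (Q * Q⁻¹ᵀ).trace := by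
    rw [hP, trace_smul, smul_eq_mul]
  have htrPinv : ((Q * Qᴴ)⁻¹).trace = c⁻¹ * (Q * Q⁻¹ᵀ).trace := by
    have : Invertible c := invertibleOfNonzero hc
    rw [hP, Matrix.inv_smul _ c hA, trace_smul, trace_inv_mul_transpose_inv hQ, invOf_eq_inv,
      smul_eq_mul]
  have hQ0 : Q ≠ 0 := fun h0 => by simp [h0] at hQ
  have ht : (Q * Q⁻¹ᵀ).trace ≠ 0 := fun ht =>
    hQ0 (trace_mul_conjTranspose_self_eq_zero_iff.mp (by rw [htrP, ht, mul_zero]))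
  have hcc : c = c⁻¹ := mul_right_cancel₀ ht (htrP ▸ htrPinv ▸ htr)
  rw [← mul_inv_cancel₀ hc, ← hcc]

end Complex

theorem stmt_3 (n : ℕ) (hn : 0 < n) (Q : Matrix (Fin n) (Fin n) ℂ)
    (hQ : IsUnit Q) (c : ℂ)
    (h : Q * Q.map (starRingEnd ℂ) = c • 1)
    (htr : (Q * Qᴴ).trace = ((Q * Qᴴ)⁻¹).trace) :
    (c = 1 ∨ c = -1) ∧ (Odd n → c = 1) := by
  have : Nonempty (Fin n) := ⟨⟨0, hn⟩⟩
  have hdet : IsUnit Q.det := (isUnit_iff_isUnit_det Q).mp hQ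
  have hpow : c ^ n = (Complex.normSq Q.det : ℂ) := by
    rw [← det_mul_map_conj, h, det_smul, det_one, mul_one, Fintype.card_fin]
  have hc : c ≠ 0 := by
    rintro rfl
    rw [zero_pow hn.ne', eq_comm, Complex.ofReal_eq_zero, Complex.normSq_eq_zero] at hpow
    exact hdet.ne_zero hpow
  have hpm : c = 1 ∨ c = -1 :=
    mul_self_eq_one_iff.mp (mul_self_eq_one_of_mul_map_conj_eq_smul_one hdet hc h htr)
  refine ⟨hpm, fun hodd => hpm.resolve_right ?_⟩
  rintro rfl
  have hre := congrArg Complex.re hpow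
  rw [hodd.neg_one_pow, Complex.ofReal_re] at hre
  linarith [Complex.normSq_nonneg Q.det, show (-1 : ℂ).re = -1 from rfl]
end

section
/- Let Q ∈ GL(n, ℂ) satisfy Q·conj(Q) = ε·I_n with ε = ±1. Then Tr(Q Q*) = Tr((Q Q*)^{-1}). -/
/-!
From `Q * conj Q = ε • 1` with `ε² = 1` one gets `conj Q = ε • Q⁻¹`, hence `Qᴴ = ε • Qᵀ⁻¹`,
`Q * Qᴴ = ε • (Q * Qᵀ⁻¹)` and `(Q * Qᴴ)⁻¹ = ε • (Qᵀ * Q⁻¹)`. The last two matrices have the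
same trace: transposing `Qᵀ * Q⁻¹` gives `Qᵀ⁻¹ * Q`, a cyclic permutation of `Q * Qᵀ⁻¹`.
-/

open Matrix

namespace Matrix

variable {n R : Type*} [Fintype n] [DecidableEq n] [CommRing R]

theorem trace_transpose_mul_inv (A : Matrix n n R) : (Aᵀ * A⁻¹).trace = (A * Aᵀ⁻¹).trace := by
  rw [← trace_transpose, transpose_mul, transpose_transpose, transpose_nonsing_inv,
    trace_mul_comm]

variable [StarRing R] {A : Matrix n n R} {ε : R}

theorem mul_smul_map_star_eq_one_of_mul_map_star_eq_smul_one
    (h : A * A.map (starRingEnd R) = ε • 1) (hε : ε * ε = 1) :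
    A * (ε • A.map (starRingEnd R)) = 1 := by
  rw [Matrix.mul_smul, h, smul_smul, hε, one_smul]

theorem inv_eq_smul_map_star_of_mul_map_star_eq_smul_one
    (h : A * A.map (starRingEnd R) = ε • 1) (hε : ε * ε = 1) :
    A⁻¹ = ε • A.map (starRingEnd R) :=
  inv_eq_right_inv (mul_smul_map_star_eq_one_of_mul_map_star_eq_smul_one h hε)

theorem isUnit_det_of_mul_map_star_eq_smul_one
    (h : A * A.map (starRingEnd R) = ε • 1) (hε : ε * ε = 1) : IsUnit A.det :=
  isUnit_det_of_right_inverse (mul_smul_map_star_eq_one_of_mul_map_star_eq_smul_one h hε)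

theorem conjTranspose_eq_smul_transpose_inv_of_mul_map_star_eq_smul_one
    (h : A * A.map (starRingEnd R) = ε • 1) (hε : ε * ε = 1) : Aᴴ = ε • Aᵀ⁻¹ := by
  rw [← transpose_nonsing_inv, inv_eq_smul_map_star_of_mul_map_star_eq_smul_one h hε,
    transpose_smul, smul_smul, hε, one_smul]
  rfl

theorem inv_mul_conjTranspose_eq_smul_of_mul_map_star_eq_smul_one
    (h : A * A.map (starRingEnd R) = ε • 1) (hε : ε * ε = 1) :
    (A * Aᴴ)⁻¹ = ε • (Aᵀ * A⁻¹) := by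
  have hdet := isUnit_det_of_mul_map_star_eq_smul_one h hε
  refine inv_eq_right_inv ?_
  simp only [conjTranspose_eq_smul_transpose_inv_of_mul_map_star_eq_smul_one h hε,
    Matrix.mul_smul, Matrix.smul_mul, smul_smul, hε, one_smul]
  rw [Matrix.mul_assoc, ← Matrix.mul_assoc Aᵀ⁻¹, nonsing_inv_mul _ (by rwa [det_transpose]),
    Matrix.one_mul, mul_nonsing_inv _ hdet]

end Matrix

theorem stmt_5_general (n : ℕ) (Q : Matrix (Fin n) (Fin n) ℂ)
    (ε : ℂ) (hε : ε = 1 ∨ ε = -1)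
    (h : Q * Q.map (starRingEnd ℂ) = ε • 1) :
    (Q * Qᴴ).trace = ((Q * Qᴴ)⁻¹).trace := by
  have hε2 : ε * ε = 1 := by rcases hε with rfl | rfl <;> norm_num
  rw [inv_mul_conjTranspose_eq_smul_of_mul_map_star_eq_smul_one h hε2,
    conjTranspose_eq_smul_transpose_inv_of_mul_map_star_eq_smul_one h hε2, Matrix.mul_smul,
    trace_smul, trace_smul, trace_transpose_mul_inv]

theorem stmt_5 (n : ℕ) (Q : Matrix (Fin n) (Fin n) ℂ) (hQ : IsUnit Q)
    (ε : ℂ) (hε : ε = 1 ∨ ε = -1)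
    (h : Q * Q.map (starRingEnd ℂ) = ε • 1) :
    (Q * Qᴴ).trace = ((Q * Qᴴ)⁻¹).trace :=
  stmt_5_general n Q ε hε h
end
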